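/- A Riemannian manifold (M,g) admits a C² function γ: M → [0,+∞), a compact set K ⊂ M, constants A, B > 0, and a smooth function G: [0,+∞) → [0,+∞) with G(0) > 0, G' ≥ 0, ∫₀^∞ dt/√(G(t)) = +∞ and limsup_{t→+∞} t·G(√t)/G(t) < +∞, such that γ is proper, |∇γ| ≤ A√γ on M \ K, and Hess γ ≤ B·√(γ·G(√γ))·g on M \ K, if and only if (M,g) admits a C² function φ: M → ℝ and constants C, D > 0 such that φ is proper, |∇φ| ≤ C on M, and Hess φ ≤ D·g on M. -/

import Mathlib

open Filter MeasureTheory Set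

/-!
Forward direction: with `w t = √(t G(√t))` and a smooth step `χ` switching on at a level `r`
above `γ + 1` on `K`, take `φ = h ∘ (γ + 1)` where `h' = χ(· - r) / w`. Then
`|∇φ| ≤ A √γ / w(γ + 1) ≤ A / √(G 0)`; since `w` is nondecreasing, `h'' ≤ χ'(· - r) / w`, which
lives where `γ ≤ r`, so the `h'' ⟨∇γ, ·⟩²` term of `Hess φ` is bounded, and
`h' Hess γ ≤ B w(γ) / w(γ + 1) ≤ B`. Properness of `φ` is the divergence of `∫ dt / w`, which the
substitution `t = u²` turns into that of `∫ 2 du / √G`.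

Backward direction: `φ` shifted to be `≥ 1` satisfies the conditions with `G t = (t + 1)²`,
`K = ∅`, `A = C` and `B = D`.
-/

/-- An abstract interface for a Riemannian manifold `(M,g)`: a topological space `M`
with tangent spaces `Tan x`, the squared pointwise norm `normSq x v = |v|²` coming
from the metric `g`, the class `C2` of `C²` real-valued functions, the norm of the
gradient `gradNorm f = |∇f|`, the pairing `gradInner f x v = ⟨∇f(x), v⟩`, the Hessian
quadratic form `hess f x v = Hess f(x)(v,v)` and the Laplace–Beltrami operator
`lap f = Δf`, together with basic laws of Riemannian geometry relating them. -/
structure RiemannianStructure (M : Type*) [TopologicalSpace M] (Tan : M → Type*)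
    [∀ x, AddCommGroup (Tan x)] [∀ x, Module ℝ (Tan x)] where
  normSq : ∀ x, Tan x → ℝ
  normSq_nonneg : ∀ x v, 0 ≤ normSq x v
  normSq_eq_zero_iff : ∀ (x) (v : Tan x), normSq x v = 0 ↔ v = 0
  C2 : (M → ℝ) → Prop
  c2_continuous : ∀ f, C2 f → Continuous f
  c2_add_const : ∀ f c, C2 f → C2 fun x => f x + c
  gradNorm : (M → ℝ) → M → ℝ
  gradNorm_nonneg : ∀ f x, 0 ≤ gradNorm f x
  gradNorm_add_const : ∀ f c x, gradNorm (fun y => f y + c) x = gradNorm f x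
  gradInner : (f : M → ℝ) → (x : M) → Tan x → ℝ
  gradInner_sq_le : ∀ f x v, gradInner f x v ^ 2 ≤ gradNorm f x ^ 2 * normSq x v
  hess : (M → ℝ) → (x : M) → Tan x → ℝ
  hess_add_const : ∀ f c x v, hess (fun y => f y + c) x v = hess f x v
  lap : (M → ℝ) → M → ℝ
  lap_add_const : ∀ f c x, lap (fun y => f y + c) x = lap f x
  c2_comp : ∀ (f : M → ℝ) (h : ℝ → ℝ) (s : Set ℝ), C2 f → IsOpen s →
    (∀ x, f x ∈ s) → ContDiffOn ℝ 2 h s → C2 (h ∘ f)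
  gradNorm_comp : ∀ (f : M → ℝ) (h : ℝ → ℝ) (s : Set ℝ), C2 f → IsOpen s →
    (∀ x, f x ∈ s) → ContDiffOn ℝ 2 h s →
    ∀ x, gradNorm (h ∘ f) x = |deriv h (f x)| * gradNorm f x
  hess_comp : ∀ (f : M → ℝ) (h : ℝ → ℝ) (s : Set ℝ), C2 f → IsOpen s →
    (∀ x, f x ∈ s) → ContDiffOn ℝ 2 h s →
    ∀ x v, hess (h ∘ f) x v =
      deriv (deriv h) (f x) * gradInner f x v ^ 2 + deriv h (f x) * hess f x v

open Real (smoothTransition)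

namespace Real.smoothTransition

theorem deriv_eq_zero_of_nonpos {s : ℝ} (hs : s ≤ 0) : deriv smoothTransition s = 0 :=
  IsLocalMin.deriv_eq_zero <| .of_forall fun y => by
    rw [zero_of_nonpos hs]; exact nonneg y

theorem deriv_eq_zero_of_one_le {s : ℝ} (hs : 1 ≤ s) : deriv smoothTransition s = 0 :=
  IsLocalMax.deriv_eq_zero <| .of_forall fun y => by
    rw [one_of_one_le hs]; exact le_one y

theorem deriv_nonneg (s : ℝ) : 0 ≤ deriv smoothTransition s :=
  smoothTransition.monotone.deriv_nonneg

theorem exists_deriv_le : ∃ C, ∀ s, deriv smoothTransition s ≤ C := by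
  have hcont : Continuous (deriv smoothTransition) :=
    smoothTransition.contDiff (n := 1).continuous_deriv le_rfl
  have hsupp : HasCompactSupport (deriv smoothTransition) :=
    HasCompactSupport.intro isCompact_Icc fun s hs => by
      rcases le_or_gt s 0 with h | h
      · exact deriv_eq_zero_of_nonpos h
      · exact deriv_eq_zero_of_one_le (not_lt.1 fun h' => hs ⟨h.le, h'.le⟩)
  exact hcont.bddAbove_range_of_hasCompactSupport hsupp |>.imp fun C hC s => hC ⟨s, rfl⟩

theorem deriv_sub_mul_le {C r t : ℝ} (hC : ∀ s, deriv smoothTransition s ≤ C)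
    (hr : 0 ≤ r) (ht : 0 ≤ t) : deriv smoothTransition (t - r) * t ≤ C * (r + 1) := by
  have hC0 : 0 ≤ C := (deriv_nonneg 0).trans (hC 0)
  rcases le_or_gt t (r + 1) with h | h
  · calc deriv smoothTransition (t - r) * t ≤ C * t := by gcongr; exact hC _
      _ ≤ C * (r + 1) := by gcongr
  · rw [deriv_eq_zero_of_one_le (by linarith), zero_mul]; positivity

end Real.smoothTransition

noncomputable def prsWeight (G : ℝ → ℝ) (t : ℝ) : ℝ := √(t * G √t)

section prsWeight

variable {G : ℝ → ℝ}

theorem sqrt_mul_sqrt_le_prsWeight (hGm : MonotoneOn G (Ici 0)) {t : ℝ} (ht : 0 ≤ t) :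
    √t * √(G 0) ≤ prsWeight G t := by
  rw [prsWeight, Real.sqrt_mul ht]
  gcongr
  exact hGm self_mem_Ici (Real.sqrt_nonneg t) (Real.sqrt_nonneg t)

theorem prsWeight_pos (hGm : MonotoneOn G (Ici 0)) (hG0 : 0 < G 0) {t : ℝ} (ht : 0 < t) :
    0 < prsWeight G t :=
  lt_of_lt_of_le (by positivity) (sqrt_mul_sqrt_le_prsWeight hGm ht.le)

theorem sqrt_le_prsWeight (hGm : MonotoneOn G (Ici 0)) {t : ℝ} (ht : 1 ≤ t) :
    √(G 0) ≤ prsWeight G t :=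
  calc √(G 0) ≤ √t * √(G 0) := le_mul_of_one_le_left (Real.sqrt_nonneg _) (Real.one_le_sqrt.2 ht)
    _ ≤ prsWeight G t := sqrt_mul_sqrt_le_prsWeight hGm (by linarith)

theorem monotoneOn_prsWeight (hGm : MonotoneOn G (Ici 0)) (hG0 : 0 < G 0) :
    MonotoneOn (prsWeight G) (Ici 0) := fun s hs t ht hst => by
  have hGs : 0 ≤ G √s := hG0.le.trans (hGm self_mem_Ici (Real.sqrt_nonneg s) (Real.sqrt_nonneg s))
  unfold prsWeight
  gcongr
  exact hGm (Real.sqrt_nonneg s) (Real.sqrt_nonneg t) (Real.sqrt_le_sqrt hst)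

theorem contDiffOn_prsWeight (hG : ContDiff ℝ 1 G) (hGm : MonotoneOn G (Ici 0)) (hG0 : 0 < G 0) :
    ContDiffOn ℝ 1 (prsWeight G) (Ioi 0) := fun t ht =>
  (contDiffAt_id.mul (hG.contDiffAt.comp t (Real.contDiffAt_sqrt ht.ne'))).sqrt
    (mul_pos ht (hG0.trans_le (hGm self_mem_Ici (Real.sqrt_nonneg t) (Real.sqrt_nonneg t)))).ne'
    |>.contDiffWithinAt

theorem prsWeight_sq {u : ℝ} (hu : 0 ≤ u) : prsWeight G (u ^ 2) = u * √(G u) := by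
  rw [prsWeight, Real.sqrt_sq hu, Real.sqrt_mul (sq_nonneg u), Real.sqrt_sq hu]

theorem not_integrableOn_inv_prsWeight (hG : Continuous G) (hGm : MonotoneOn G (Ici 0))
    (hG0 : 0 < G 0) (hdiv : ¬IntegrableOn (fun t => (√(G t))⁻¹) (Ioi 0)) (T : ℝ) :
    ¬IntegrableOn (fun t => (prsWeight G t)⁻¹) (Ioi T) := by
  intro hw
  have hGpos : ∀ u, 0 ≤ u → 0 < G u := fun u hu => hG0.trans_le (hGm self_mem_Ici hu hu)
  have hsubst : IntegrableOn (fun u => |2 * u| • (prsWeight G (u ^ 2))⁻¹) (Ioi √T) :=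
    (integrableOn_image_iff_integrableOn_abs_deriv_smul (f := fun u => u ^ 2) measurableSet_Ioi
      (fun u _ => by simpa using (hasDerivAt_pow 2 u).hasDerivWithinAt)
      ((pow_left_strictMonoOn₀ two_ne_zero).injOn.mono fun u (hu : √T < u) =>
        ((Real.sqrt_nonneg T).trans hu.le : 0 ≤ u)) _).1
      (hw.mono_set (image_subset_iff.2 fun u hu => Real.lt_sq_of_sqrt_lt hu))
  have htail : IntegrableOn (fun u => (√(G u))⁻¹) (Ioi √T) := by
    refine IntegrableOn.congr_fun (hsubst.const_mul 2⁻¹) (fun u (hu : √T < u) => ?_)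
      measurableSet_Ioi
    have hu0 : 0 < u := (Real.sqrt_nonneg T).trans_lt hu
    have := Real.sqrt_pos.2 (hGpos u hu0.le)
    rw [smul_eq_mul, prsWeight_sq hu0.le, abs_of_pos (by positivity)]
    field_simp
  have hhead : IntegrableOn (fun u => (√(G u))⁻¹) (Ioc 0 √T) :=
    (ContinuousOn.integrableOn_Icc fun u hu => ((hG.sqrt.continuousAt).inv₀
      (Real.sqrt_pos.2 (hGpos u hu.1)).ne').continuousWithinAt).mono_set Ioc_subset_Icc_self
  exact hdiv (Ioc_union_Ioi_eq_Ioi (Real.sqrt_nonneg T) ▸ hhead.union htail)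

end prsWeight

theorem tendsto_intervalIntegral_atTop_of_not_integrableOn {f : ℝ → ℝ} {a : ℝ}
    (hf : Continuous f) (hf0 : ∀ x, 0 ≤ f x) (hfi : ¬IntegrableOn f (Ioi a)) :
    Tendsto (fun t => ∫ x in a..t, f x) atTop atTop := by
  have hmono : Monotone fun t => ∫ x in a..t, f x := fun s t hst => by
    have := intervalIntegral.integral_add_adjacent_intervals
      (hf.intervalIntegrable (μ := volume) a s) (hf.intervalIntegrable s t)
    linarith [intervalIntegral.integral_nonneg (μ := volume) hst fun x _ => hf0 x]
  refine tendsto_atTop_atTop_of_monotone hmono fun I => ?_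
  by_contra! hI
  refine hfi (integrableOn_Ioi_of_intervalIntegral_norm_bounded I a
    (fun t => hf.integrableOn_Ioc) tendsto_id (.of_forall fun t => ?_))
  simp only [Real.norm_of_nonneg (hf0 _), id]
  exact (hI t).le

noncomputable def cutoffPrimitive (w : ℝ → ℝ) (r t : ℝ) : ℝ :=
  ∫ s in r..t, smoothTransition (s - r) / w s

section cutoffPrimitive

variable {w : ℝ → ℝ} {r : ℝ}

theorem continuous_smoothTransition_sub_div (hw : ContinuousOn w (Ioi 0))
    (hw0 : ∀ t, 0 < t → 0 < w t) (hr : 0 < r) :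
    Continuous fun s => smoothTransition (s - r) / w s := by
  refine continuous_iff_continuousAt.2 fun s => ?_
  rcases lt_or_ge 0 s with hs | hs
  · exact (smoothTransition.continuous.comp (continuous_sub_right r)).continuousAt.div
      (hw.continuousAt (Ioi_mem_nhds hs)) (hw0 s hs).ne'
  · refine continuousAt_const.congr (f := fun _ => (0 : ℝ)) ?_
    filter_upwards [Iio_mem_nhds (hs.trans_lt hr)] with y (hy : y < r)
    rw [smoothTransition.zero_of_nonpos (by linarith), zero_div]

theorem deriv_cutoffPrimitive (hw : ContinuousOn w (Ioi 0)) (hw0 : ∀ t, 0 < t → 0 < w t)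
    (hr : 0 < r) : deriv (cutoffPrimitive w r) = fun t => smoothTransition (t - r) / w t :=
  funext fun t => ((continuous_smoothTransition_sub_div hw hw0 hr).integral_hasStrictDerivAt
    r t).hasDerivAt.deriv

theorem hasDerivAt_smoothTransition_sub_div (hw : ContDiffOn ℝ 1 w (Ioi 0)) {t : ℝ}
    (ht : 0 < t) (hwt : w t ≠ 0) :
    HasDerivAt (fun s => smoothTransition (s - r) / w s)
      ((deriv smoothTransition (t - r) * w t - smoothTransition (t - r) * deriv w t) / w t ^ 2)
      t := by
  have hχ : HasDerivAt (fun s => smoothTransition (s - r)) (deriv smoothTransition (t - r)) t :=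
    ((smoothTransition.contDiff (n := 1)).differentiable one_ne_zero
      (t - r)).hasDerivAt.comp_sub_const t r
  exact hχ.div ((hw.contDiffAt (Ioi_mem_nhds ht)).differentiableAt one_ne_zero).hasDerivAt hwt

theorem contDiffOn_cutoffPrimitive (hw : ContDiffOn ℝ 1 w (Ioi 0))
    (hw0 : ∀ t, 0 < t → 0 < w t) (hr : 0 < r) :
    ContDiffOn ℝ 2 (cutoffPrimitive w r) (Ioi 0) := by
  rw [show (2 : WithTop ℕ∞) = 1 + 1 from rfl, contDiffOn_succ_iff_deriv_of_isOpen isOpen_Ioi,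
    deriv_cutoffPrimitive hw.continuousOn hw0 hr]
  refine ⟨?_, by simp, fun t ht => ?_⟩
  · exact fun t _ => ((continuous_smoothTransition_sub_div hw.continuousOn hw0
      hr).integral_hasStrictDerivAt r t).hasDerivAt.differentiableAt.differentiableWithinAt
  · exact ((smoothTransition.contDiff.comp (contDiff_id.sub contDiff_const)).contDiffAt.div
      (hw.contDiffAt (Ioi_mem_nhds ht)) (hw0 t ht).ne').contDiffWithinAt

theorem deriv_deriv_cutoffPrimitive_le (hw : ContDiffOn ℝ 1 w (Ioi 0))
    (hw0 : ∀ t, 0 < t → 0 < w t) (hwm : MonotoneOn w (Ioi 0)) (hr : 0 < r) {t : ℝ}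
    (ht : 0 < t) :
    deriv (deriv (cutoffPrimitive w r)) t ≤ deriv smoothTransition (t - r) / w t := by
  have hwt := hw0 t ht
  have hw' : 0 ≤ deriv w t := by
    rw [← derivWithin_of_isOpen isOpen_Ioi ht]; exact hwm.derivWithin_nonneg
  rw [deriv_cutoffPrimitive hw.continuousOn hw0 hr,
    (hasDerivAt_smoothTransition_sub_div hw ht hwt.ne').deriv, div_le_div_iff₀ (by positivity) hwt]
  have := smoothTransition.nonneg (t - r)
  nlinarith [mul_nonneg this hw']

theorem tendsto_cutoffPrimitive_atTop (hw : ContinuousOn w (Ioi 0))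
    (hw0 : ∀ t, 0 < t → 0 < w t) (hr : 0 < r)
    (hwi : ¬IntegrableOn (fun t => (w t)⁻¹) (Ioi (r + 1))) :
    Tendsto (cutoffPrimitive w r) atTop atTop := by
  refine tendsto_intervalIntegral_atTop_of_not_integrableOn
    (continuous_smoothTransition_sub_div hw hw0 hr) (fun s => ?_) fun hi => hwi ?_
  · rcases le_or_gt s r with hs | hs
    · rw [smoothTransition.zero_of_nonpos (by linarith), zero_div]
    · exact div_nonneg (smoothTransition.nonneg _) (hw0 s (hr.trans hs)).le
  · refine (hi.mono_set (Ioi_subset_Ioi (by linarith))).congr_fun (fun s (hs : r + 1 < s) => ?_)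
      measurableSet_Ioi
    dsimp only
    rw [smoothTransition.one_of_one_le (by linarith), one_div]

end cutoffPrimitive

theorem deriv_deriv_cutoffPrimitive_prsWeight_le {G : ℝ → ℝ} {r : ℝ} (hG : ContDiff ℝ 1 G)
    (hGm : MonotoneOn G (Ici 0)) (hG0 : 0 < G 0) (hr : 0 < r) {t : ℝ} (ht : 1 ≤ t) :
    deriv (deriv (cutoffPrimitive (prsWeight G) r)) t ≤
      deriv smoothTransition (t - r) / √(G 0) :=
  (deriv_deriv_cutoffPrimitive_le (contDiffOn_prsWeight hG hGm hG0)
    (fun _ => prsWeight_pos hGm hG0) ((monotoneOn_prsWeight hGm hG0).mono Ioi_subset_Ici_self)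
    hr (by linarith)).trans (div_le_div_of_nonneg_left (smoothTransition.deriv_nonneg _)
      (Real.sqrt_pos.2 hG0) (sqrt_le_prsWeight hGm ht))

theorem not_integrableOn_Ioi_inv_add_one : ¬IntegrableOn (fun t : ℝ => (t + 1)⁻¹) (Ioi 0) := by
  intro h
  refine not_integrableOn_Ioi_inv (a := 0 + 1) ?_
  rw [← image_add_const_Ioi, integrableOn_image_iff_integrableOn_abs_deriv_smul measurableSet_Ioi
    (fun t _ => ((hasDerivAt_id' t).add_const 1).hasDerivWithinAt) (add_left_injective 1).injOn]
  simpa using h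

theorem lintegral_inv_sqrt_add_one_sq_eq_top :
    ∫⁻ t in Ioi (0 : ℝ), ENNReal.ofReal (1 / √((t + 1) ^ 2)) = ⊤ := by
  rw [setLIntegral_congr_fun measurableSet_Ioi (g := fun t => ENNReal.ofReal (t + 1)⁻¹)
    fun t (ht : 0 < t) => by rw [Real.sqrt_sq (by linarith), one_div]]
  by_contra h
  refine not_integrableOn_Ioi_inv_add_one ((lintegral_ofReal_ne_top_iff_integrable ?_ ?_).1 h)
  · exact (by fun_prop : Measurable fun t : ℝ => (t + 1)⁻¹).aestronglyMeasurable
  · exact (ae_restrict_iff' measurableSet_Ioi).2 (.of_forall fun t (ht : 0 < t) =>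
      inv_nonneg.2 (by linarith))

theorem limsup_mul_sqrt_add_one_sq_div_add_one_sq_lt_top :
    limsup (fun t : ℝ => ((t * (√t + 1) ^ 2 / (t + 1) ^ 2 : ℝ) : EReal)) atTop < ⊤ := by
  refine (limsup_le_of_le (by isBoundedDefault) ?_).trans_lt (EReal.coe_lt_top 2)
  filter_upwards [eventually_ge_atTop 0] with t ht
  rw [EReal.coe_le_coe_iff, div_le_iff₀ (by positivity)]
  have := Real.sq_sqrt ht
  nlinarith [sq_nonneg (√t - 1), Real.sqrt_nonneg t]

namespace RiemannianStructure

variable {M : Type*} [TopologicalSpace M] {Tan : M → Type*} [∀ x, AddCommGroup (Tan x)]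
  [∀ x, Module ℝ (Tan x)] (R : RiemannianStructure M Tan)

theorem hess_comp_le {f : M → ℝ} {h : ℝ → ℝ} {s : Set ℝ} (hf : R.C2 f) (hs : IsOpen s)
    (hfs : ∀ x, f x ∈ s) (hh : ContDiffOn ℝ 2 h s) (x : M) (v : Tan x) {a : ℝ}
    (ha : deriv (deriv h) (f x) ≤ a) (ha0 : 0 ≤ a) :
    R.hess (h ∘ f) x v ≤ a * R.gradNorm f x ^ 2 * R.normSq x v + deriv h (f x) * R.hess f x v := by
  rw [R.hess_comp f h s hf hs hfs hh]
  gcongr ?_ + _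
  calc deriv (deriv h) (f x) * R.gradInner f x v ^ 2 ≤ a * R.gradInner f x v ^ 2 := by gcongr
    _ ≤ a * (R.gradNorm f x ^ 2 * R.normSq x v) := by gcongr; exact R.gradInner_sq_le f x v
    _ = a * R.gradNorm f x ^ 2 * R.normSq x v := (mul_assoc ..).symm

variable {G : ℝ → ℝ} {r : ℝ}

theorem gradNorm_comp_cutoffPrimitive_le (hG : ContDiff ℝ 1 G) (hGm : MonotoneOn G (Ici 0))
    (hG0 : 0 < G 0) (hr : 0 < r) {f : M → ℝ} (hf : R.C2 f) (hf0 : ∀ x, 0 < f x) {A : ℝ}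
    (hA : 0 ≤ A) {x : M} (hx : r < f x → R.gradNorm f x ≤ A * √(f x)) :
    R.gradNorm (cutoffPrimitive (prsWeight G) r ∘ f) x ≤ A / √(G 0) := by
  have hw := contDiffOn_prsWeight hG hGm hG0
  have hw0 : ∀ t, 0 < t → 0 < prsWeight G t := fun t => prsWeight_pos hGm hG0
  rw [R.gradNorm_comp f _ (Ioi 0) hf isOpen_Ioi hf0 (contDiffOn_cutoffPrimitive hw hw0 hr),
    deriv_cutoffPrimitive hw.continuousOn hw0 hr]
  dsimp only
  rcases le_or_gt (f x) r with hxr | hxr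
  · rw [smoothTransition.zero_of_nonpos (by linarith), zero_div, abs_zero, zero_mul]
    positivity
  have hwx := hw0 _ (hf0 x)
  calc |smoothTransition (f x - r) / prsWeight G (f x)| * R.gradNorm f x
      ≤ (prsWeight G (f x))⁻¹ * (A * √(f x)) := by
        refine mul_le_mul ?_ (hx hxr) (R.gradNorm_nonneg f x) (inv_nonneg.2 hwx.le)
        rw [abs_of_nonneg (div_nonneg (smoothTransition.nonneg _) hwx.le), div_eq_mul_inv]
        exact mul_le_of_le_one_left (inv_nonneg.2 hwx.le) (smoothTransition.le_one _)
    _ ≤ A / √(G 0) := by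
        rw [inv_mul_eq_div, div_le_div_iff₀ hwx (Real.sqrt_pos.2 hG0), mul_assoc]
        gcongr
        exact sqrt_mul_sqrt_le_prsWeight hGm (hf0 x).le

theorem hess_comp_cutoffPrimitive_le (hG : ContDiff ℝ 1 G) (hGm : MonotoneOn G (Ici 0))
    (hG0 : 0 < G 0) (hr : 0 < r) {f : M → ℝ} (hf : R.C2 f) (hf1 : ∀ x, 1 ≤ f x) {A B C : ℝ}
    (hC : ∀ s, deriv smoothTransition s ≤ C) (hB : 0 ≤ B) {x : M} {v : Tan x}
    (hx : r < f x → R.gradNorm f x ≤ A * √(f x) ∧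
      R.hess f x v ≤ B * prsWeight G (f x) * R.normSq x v) :
    R.hess (cutoffPrimitive (prsWeight G) r ∘ f) x v ≤
      (C * (r + 1) * A ^ 2 / √(G 0) + B) * R.normSq x v := by
  have hw := contDiffOn_prsWeight hG hGm hG0
  have hw0 : ∀ t, 0 < t → 0 < prsWeight G t := fun t => prsWeight_pos hGm hG0
  have hf0 : ∀ x, 0 < f x := fun x => zero_lt_one.trans_le (hf1 x)
  have hC0 : 0 ≤ C := (smoothTransition.deriv_nonneg 0).trans (hC 0)
  have hv := R.normSq_nonneg x v
  have hχ' : 0 ≤ deriv smoothTransition (f x - r) / √(G 0) :=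
    div_nonneg (smoothTransition.deriv_nonneg _) (Real.sqrt_nonneg _)
  refine (R.hess_comp_le hf isOpen_Ioi hf0 (contDiffOn_cutoffPrimitive hw hw0 hr) x v
    (deriv_deriv_cutoffPrimitive_prsWeight_le hG hGm hG0 hr (hf1 x)) hχ').trans ?_
  rw [deriv_cutoffPrimitive hw.continuousOn hw0 hr]
  dsimp only
  rcases le_or_gt (f x) r with hxr | hxr
  · rw [smoothTransition.deriv_eq_zero_of_nonpos (by linarith),
      smoothTransition.zero_of_nonpos (by linarith)]
    simp only [zero_div, zero_mul, add_zero]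
    positivity
  obtain ⟨hgrad, hhess⟩ := hx hxr
  have hgrad2 : R.gradNorm f x ^ 2 ≤ A ^ 2 * f x :=
    calc R.gradNorm f x ^ 2 ≤ (A * √(f x)) ^ 2 := by gcongr; exact R.gradNorm_nonneg f x
      _ = A ^ 2 * f x := by rw [mul_pow, Real.sq_sqrt (hf0 x).le]
  have hwx := hw0 _ (hf0 x)
  rw [add_mul]
  gcongr ?_ + ?_
  · calc deriv smoothTransition (f x - r) / √(G 0) * R.gradNorm f x ^ 2 * R.normSq x v
        ≤ deriv smoothTransition (f x - r) / √(G 0) * (A ^ 2 * f x) * R.normSq x v := by gcongr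
      _ = deriv smoothTransition (f x - r) * f x * A ^ 2 / √(G 0) * R.normSq x v := by ring
      _ ≤ C * (r + 1) * A ^ 2 / √(G 0) * R.normSq x v := by
          gcongr ?_ * _ / _ * _
          exact smoothTransition.deriv_sub_mul_le hC hr.le (hf0 x).le
  · calc smoothTransition (f x - r) / prsWeight G (f x) * R.hess f x v
        ≤ smoothTransition (f x - r) / prsWeight G (f x) *
            (B * prsWeight G (f x) * R.normSq x v) := by
          gcongr
          exact div_nonneg (smoothTransition.nonneg _) hwx.le
      _ = smoothTransition (f x - r) * (B * R.normSq x v) := by field_simp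
      _ ≤ B * R.normSq x v :=
          mul_le_of_le_one_left (by positivity) (smoothTransition.le_one _)

theorem exists_proper_boundedGradient_boundedHessian {γ : M → ℝ} {K : Set M} {A B : ℝ}
    (hK : IsCompact K) (hA : 0 < A) (hB : 0 < B) (hγ : R.C2 γ) (hγ0 : ∀ x, 0 ≤ γ x)
    (hG : ContDiff ℝ 1 G) (hGm : MonotoneOn G (Ici 0)) (hG0 : 0 < G 0)
    (hdiv : ¬IntegrableOn (fun t => (√(G t))⁻¹) (Ioi 0)) (hprop : Tendsto γ (cocompact M) atTop)
    (hgrad : ∀ x ∉ K, R.gradNorm γ x ≤ A * √(γ x))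
    (hhess : ∀ x ∉ K, ∀ v, R.hess γ x v ≤ B * prsWeight G (γ x) * R.normSq x v) :
    ∃ (φ : M → ℝ) (C D : ℝ), 0 < C ∧ 0 < D ∧ R.C2 φ ∧ Tendsto φ (cocompact M) atTop ∧
      (∀ x, R.gradNorm φ x ≤ C) ∧ ∀ x v, R.hess φ x v ≤ D * R.normSq x v := by
  obtain ⟨C₀, hC₀⟩ := smoothTransition.exists_deriv_le
  have hC₀0 : 0 ≤ C₀ := (smoothTransition.deriv_nonneg 0).trans (hC₀ 0)
  obtain ⟨b, hb⟩ := hK.bddAbove_image (R.c2_continuous γ hγ).continuousOn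
  set r := max b 0 + 1
  have hr : 0 < r := by positivity
  have hrK : ∀ x, r < γ x + 1 → x ∉ K := fun x hx hxK => by
    linarith [hb (mem_image_of_mem γ hxK), le_max_left b 0]
  have hf : R.C2 fun x => γ x + 1 := R.c2_add_const γ 1 hγ
  have hf1 : ∀ x, 1 ≤ γ x + 1 := fun x => by linarith [hγ0 x]
  have hw := contDiffOn_prsWeight hG hGm hG0
  have hw0 : ∀ t, 0 < t → 0 < prsWeight G t := fun t => prsWeight_pos hGm hG0
  refine ⟨cutoffPrimitive (prsWeight G) r ∘ fun x => γ x + 1, A / √(G 0),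
    C₀ * (r + 1) * A ^ 2 / √(G 0) + B, by positivity, by positivity,
    R.c2_comp _ _ _ hf isOpen_Ioi (fun x => zero_lt_one.trans_le (hf1 x))
      (contDiffOn_cutoffPrimitive hw hw0 hr),
    (tendsto_cutoffPrimitive_atTop hw.continuousOn hw0 hr
      (not_integrableOn_inv_prsWeight hG.continuous hGm hG0 hdiv _)).comp
      (tendsto_atTop_add_const_right _ 1 hprop), fun x => ?_, fun x v => ?_⟩
  · refine R.gradNorm_comp_cutoffPrimitive_le hG hGm hG0 hr hf
      (fun x => zero_lt_one.trans_le (hf1 x)) hA.le fun hx => ?_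
    rw [R.gradNorm_add_const]
    exact (hgrad x (hrK x hx)).trans (by gcongr; linarith)
  · refine R.hess_comp_cutoffPrimitive_le hG hGm hG0 hr hf hf1 hC₀ hB.le fun hx => ⟨?_, ?_⟩
    · rw [R.gradNorm_add_const]
      exact (hgrad x (hrK x hx)).trans (by gcongr; linarith)
    · rw [R.hess_add_const]
      refine (hhess x (hrK x hx) v).trans ?_
      gcongr
      · exact R.normSq_nonneg x v
      · exact monotoneOn_prsWeight hGm hG0 (hγ0 x) (zero_le_one.trans (hf1 x))
          (by linarith)

theorem exists_prs_data {φ : M → ℝ} {C D : ℝ} (hC : 0 < C) (hD : 0 < D) (hφ : R.C2 φ)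
    (hprop : Tendsto φ (cocompact M) atTop) (hgrad : ∀ x, R.gradNorm φ x ≤ C)
    (hhess : ∀ x v, R.hess φ x v ≤ D * R.normSq x v) :
    ∃ (γ : M → ℝ) (K : Set M) (A B : ℝ) (G : ℝ → ℝ),
      IsCompact K ∧ 0 < A ∧ 0 < B ∧ R.C2 γ ∧ (∀ x, 0 ≤ γ x) ∧
      ContDiff ℝ (⊤ : ℕ∞) G ∧ (∀ t, 0 ≤ t → 0 ≤ G t) ∧ 0 < G 0 ∧
      (∀ t, 0 ≤ t → 0 ≤ deriv G t) ∧
      (∫⁻ t in Ioi (0 : ℝ), ENNReal.ofReal (1 / √(G t)) = ⊤) ∧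
      (limsup (fun t : ℝ => ((t * G √t / G t : ℝ) : EReal)) atTop < ⊤) ∧
      Tendsto γ (cocompact M) atTop ∧ (∀ x ∉ K, R.gradNorm γ x ≤ A * √(γ x)) ∧
      ∀ x ∉ K, ∀ v, R.hess γ x v ≤ B * √(γ x * G √(γ x)) * R.normSq x v := by
  obtain ⟨m, hm⟩ : ∃ m, ∀ x, m ≤ φ x := by
    rcases isEmpty_or_nonempty M with hM | hM
    · exact ⟨0, isEmptyElim⟩
    · obtain ⟨x₀, hx₀⟩ := (R.c2_continuous φ hφ).exists_forall_le hprop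
      exact ⟨φ x₀, hx₀⟩
  have hγ1 : ∀ x, 1 ≤ φ x + (1 - m) := fun x => by linarith [hm x]
  refine ⟨fun x => φ x + (1 - m), ∅, C, D, fun t => (t + 1) ^ 2, isCompact_empty, hC, hD,
    R.c2_add_const φ _ hφ, fun x => zero_le_one.trans (hγ1 x), by fun_prop,
    fun t _ => sq_nonneg _, by norm_num, fun t ht => ?_, lintegral_inv_sqrt_add_one_sq_eq_top,
    limsup_mul_sqrt_add_one_sq_div_add_one_sq_lt_top, tendsto_atTop_add_const_right _ _ hprop,
    fun x _ => ?_, fun x _ v => ?_⟩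
  · rw [(((hasDerivAt_id' t).add_const 1).fun_pow 2).deriv]
    positivity
  · rw [R.gradNorm_add_const]
    exact (hgrad x).trans (le_mul_of_one_le_right hC.le (Real.one_le_sqrt.2 (hγ1 x)))
  · rw [R.hess_add_const]
    refine (hhess x v).trans (mul_le_mul_of_nonneg_right ?_ (R.normSq_nonneg x v))
    refine le_mul_of_one_le_right hD.le (Real.one_le_sqrt.2 (one_le_mul_of_one_le_of_one_le
      (hγ1 x) (one_le_pow₀ ?_)))
    linarith [Real.sqrt_nonneg (φ x + (1 - m))]

end RiemannianStructure

theorem prs_data_iff_proper_boundedGradient_boundedHessian_general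
    {M : Type*} [TopologicalSpace M] {Tan : M → Type*}
    [∀ x, AddCommGroup (Tan x)] [∀ x, Module ℝ (Tan x)]
    (R : RiemannianStructure M Tan)
    :
    (∃ (γ : M → ℝ) (K : Set M) (A B : ℝ) (G : ℝ → ℝ),
      IsCompact K ∧ 0 < A ∧ 0 < B ∧
      R.C2 γ ∧ (∀ x, 0 ≤ γ x) ∧
      ContDiff ℝ (⊤ : ℕ∞) G ∧ (∀ t, 0 ≤ t → 0 ≤ G t) ∧ 0 < G 0 ∧
      (∀ t, 0 ≤ t → 0 ≤ deriv G t) ∧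
      (∫⁻ t in Set.Ioi (0:ℝ), ENNReal.ofReal (1 / Real.sqrt (G t)) = ⊤) ∧
      (Filter.limsup (fun t : ℝ => ((t * G (Real.sqrt t) / G t : ℝ) : EReal))
        Filter.atTop < ⊤) ∧
      Tendsto γ (cocompact M) atTop ∧
      (∀ x ∉ K, R.gradNorm γ x ≤ A * Real.sqrt (γ x)) ∧
      (∀ x ∉ K, ∀ v,
        R.hess γ x v ≤ B * Real.sqrt (γ x * G (Real.sqrt (γ x))) * R.normSq x v))
    ↔
    (∃ (φ : M → ℝ) (C D : ℝ), 0 < C ∧ 0 < D ∧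
      R.C2 φ ∧ Tendsto φ (cocompact M) atTop ∧
      (∀ x, R.gradNorm φ x ≤ C) ∧
      (∀ x v, R.hess φ x v ≤ D * R.normSq x v)) := by
  constructor
  · rintro ⟨γ, K, A, B, G, hK, hA, hB, hγ, hγ0, hG, -, hG0, hG', hdiv, -, hprop, hgrad, hhess⟩
    have hGm : MonotoneOn G (Ici 0) :=
      monotoneOn_of_deriv_nonneg (convex_Ici 0) hG.continuous.continuousOn
        (hG.differentiable (by simp)).differentiableOn fun t ht => hG' t (interior_subset ht)
    refine R.exists_proper_boundedGradient_boundedHessian hK hA hB hγ hγ0 (hG.of_le (by simp))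
      hGm hG0 (fun hi => hi.lintegral_lt_top.ne ?_) hprop hgrad hhess
    simpa only [one_div] using hdiv
  · rintro ⟨φ, C, D, hC, hD, hφ, hprop, hgrad, hhess⟩
    exact R.exists_prs_data hC hD hφ hprop hgrad hhess

/-- **Proposition 1 (Hessian version).** A Riemannian manifold `(M,g)` admits a `C²`
function `γ : M → [0,∞)`, a compact `K ⊆ M`, constants `A, B > 0` and a smooth
`G : [0,∞) → [0,∞)` with `G(0) > 0`, `G' ≥ 0`, `∫₀^∞ dt/√(G t) = ∞` and
`limsup_{t→∞} t·G(√t)/G(t) < ∞` such that `γ` is proper, `|∇γ| ≤ A·√γ` on `M \\ K`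
and `Hess γ ≤ B·√(γ·G(√γ))·g` on `M \\ K`, if and only if `(M,g)` admits a proper `C²`
function `φ : M → ℝ` and constants `C, D > 0` with `|∇φ| ≤ C` and `Hess φ ≤ D·g` on `M`. -/
theorem prs_data_iff_proper_boundedGradient_boundedHessian
    {M : Type*} [TopologicalSpace M] [Nonempty M] {Tan : M → Type*}
    [∀ x, AddCommGroup (Tan x)] [∀ x, Module ℝ (Tan x)]
    (R : RiemannianStructure M Tan)
    :
    (∃ (γ : M → ℝ) (K : Set M) (A B : ℝ) (G : ℝ → ℝ),
      IsCompact K ∧ 0 < A ∧ 0 < B ∧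
      R.C2 γ ∧ (∀ x, 0 ≤ γ x) ∧
      ContDiff ℝ (⊤ : ℕ∞) G ∧ (∀ t, 0 ≤ t → 0 ≤ G t) ∧ 0 < G 0 ∧
      (∀ t, 0 ≤ t → 0 ≤ deriv G t) ∧
      (∫⁻ t in Set.Ioi (0:ℝ), ENNReal.ofReal (1 / Real.sqrt (G t)) = ⊤) ∧
      (Filter.limsup (fun t : ℝ => ((t * G (Real.sqrt t) / G t : ℝ) : EReal))
        Filter.atTop < ⊤) ∧
      Tendsto γ (cocompact M) atTop ∧
      (∀ x ∉ K, R.gradNorm γ x ≤ A * Real.sqrt (γ x)) ∧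
      (∀ x ∉ K, ∀ v,
        R.hess γ x v ≤ B * Real.sqrt (γ x * G (Real.sqrt (γ x))) * R.normSq x v))
    ↔
    (∃ (φ : M → ℝ) (C D : ℝ), 0 < C ∧ 0 < D ∧
      R.C2 φ ∧ Tendsto φ (cocompact M) atTop ∧
      (∀ x, R.gradNorm φ x ≤ C) ∧
      (∀ x v, R.hess φ x v ≤ D * R.normSq x v)) :=
  prs_data_iff_proper_boundedGradient_boundedHessian_general R
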